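/- arXiv:1811.11685 — 3 statements merged into one kernel-verified Lean document; each statement's English description precedes it below -/
import Mathlib

section
/- Let λ = [λ(0), ..., λ(m)] be a finite path and suppose k < m is a cut time for λ, meaning λ[0,k] ∩ λ[k+1,m] = ∅. Then the loop-erasure of λ decomposes as the concatenation LE(λ) = LE(λ[0,k]) ⊕ LE(λ[k+1,m]). -/
/-- Points of the integer lattice `ℤ³`. -/
abbrev Z3 := Fin 3 → ℤ

/-- Nearest-neighbor adjacency on `ℤ³`. -/
def Z3.adj (x y : Z3) : Prop := (∑ i, |x i - y i|) = 1

/-- A (finite, nearest-neighbor) path in `ℤ³`: a nonempty list of points with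
consecutive points adjacent. -/
def IsPath (l : List Z3) : Prop := l ≠ [] ∧ l.Chain' Z3.adj

/-- Chronological loop-erasure of a finite list: keep the first point `a`, then
continue with the part of the list strictly after the *last* occurrence of `a`
(which is `(l.reverse.takeWhile (· ≠ a)).reverse`). -/
def loopErase {α : Type*} [DecidableEq α] : List α → List α
  | [] => []
  | a :: l => a :: loopErase ((l.reverse.takeWhile (fun b => decide (b ≠ a))).reverse)
termination_by l => l.length
decreasing_by
  simp only [List.length_cons, List.length_reverse]
  exact Nat.lt_succ_of_le ((List.Sublist.length_le (List.takeWhile_sublist _)).trans (by simp))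

theorem List.rtakeWhile_append_of_forall {α : Type*} {p : α → Bool} {l₁ l₂ : List α}
    (h : ∀ x ∈ l₂, p x) : (l₁ ++ l₂).rtakeWhile p = l₁.rtakeWhile p ++ l₂ := by
  simp only [List.rtakeWhile, List.reverse_append]
  rw [List.takeWhile_append_of_pos (by simpa using h), List.reverse_append, List.reverse_reverse]

section LoopErasure

variable {α : Type*} [DecidableEq α]

theorem loopErase_cons (a : α) (l : List α) :
    loopErase (a :: l) = a :: loopErase (l.rtakeWhile (· ≠ a)) := by
  rw [loopErase, List.rtakeWhile]

/-- Loop-erasure splits at a cut: since no point of `A` is visited in `B`, every last visit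
to a point of `A` happens inside `A`, so erasing `A ++ B` never removes a point of `B`. -/
theorem loopErase_append_of_disjoint (A B : List α) (h : ∀ x ∈ A, x ∉ B) :
    loopErase (A ++ B) = loopErase A ++ loopErase B := by
  match A with
  | [] => rw [List.nil_append, loopErase, List.nil_append]
  | a :: l =>
    have hB : ∀ x ∈ B, decide (x ≠ a) := fun x hx => by
      simpa using fun hxa : x = a => h a List.mem_cons_self (hxa ▸ hx)
    have hsub : l.rtakeWhile (· ≠ a) ⊆ l := (List.rtakeWhile_suffix (p := (· ≠ a)) l).subset
    rw [List.cons_append, loopErase_cons, loopErase_cons, List.rtakeWhile_append_of_forall hB,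
      loopErase_append_of_disjoint _ B fun x hx => h x (List.mem_cons_of_mem a (hsub hx)),
      List.cons_append]
termination_by A.length
decreasing_by
  exact Nat.lt_succ_of_le (List.rtakeWhile_suffix (p := (· ≠ a)) l).length_le

end LoopErasure

theorem loopErase_cutTime_general (l : List Z3) (k : ℕ)
    (hcut : ∀ x ∈ l.take (k + 1), x ∉ l.drop (k + 1)) :
    loopErase l = loopErase (l.take (k + 1)) ++ loopErase (l.drop (k + 1)) := by
  conv_lhs => rw [← List.take_append_drop (k + 1) l]
  exact loopErase_append_of_disjoint _ _ hcut

/-- If `k < m` is a cut time for the path `λ = [λ(0), …, λ(m)]`,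
i.e. `λ[0,k]` and `λ[k+1,m]` share no vertex, then the loop-erasure decomposes
as the concatenation `LE(λ) = LE(λ[0,k]) ⊕ LE(λ[k+1,m])`. -/
theorem loopErase_cutTime (l : List Z3) (h : IsPath l) (k : ℕ)
    (hk : k + 1 < l.length)
    (hcut : ∀ x ∈ l.take (k + 1), x ∉ l.drop (k + 1)) :
    loopErase l = loopErase (l.take (k + 1)) ++ loopErase (l.drop (k + 1)) :=
  loopErase_cutTime_general l k hcut
end

section
/- Let λ be a finite path, B a set of vertices, and suppose λ visits B. Let T be the last time λ is in B, let η = LE(λ[0,T]) be the loop-erasure of the initial segment up to T, and let u be the first index at which η enters B. Then the loop-erasure LE(λ) intersects B if and only if η[0,u] ∩ λ[T+1, m] = ∅, where m is the length of λ. -/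
/-!
Split `λ = s ++ t` with `s = λ[0,T]` and `t = λ[T+1,m]`, so that `t` misses `B`. Erasing the
loops of `s ++ t` keeps the longest prefix of `η = LE(s)` that avoids `t` and continues with
vertices of `t` only. Hence `LE(λ)` meets `B` iff that prefix does, and since `u` is the first
index at which `η` meets `B`, this happens iff `η[0,u]` avoids `t`.
-/

namespace List

variable {α : Type*}

theorem rtakeWhile_append_of_forall_s3 {p : α → Bool} (s : List α) {t : List α}
    (ht : ∀ x ∈ t, p x) : (s ++ t).rtakeWhile p = s.rtakeWhile p ++ t := by
  simp [rtakeWhile, takeWhile_append_of_pos (l₁ := t.reverse) (by simpa using ht)]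

theorem rtakeWhile_append_of_exists {p : α → Bool} (s : List α) {t : List α}
    (ht : ∃ x ∈ t, ¬ p x) : (s ++ t).rtakeWhile p = t.rtakeWhile p := by
  have hlen : (t.reverse.takeWhile p).length ≠ t.reverse.length := fun h => by
    obtain ⟨x, hx, hpx⟩ := ht
    have hall := takeWhile_eq_self_iff.1 ((takeWhile_prefix p).eq_of_length h)
    exact hpx (hall x (mem_reverse.2 hx))
  simp only [rtakeWhile, reverse_append, takeWhile_append, if_neg hlen]

theorem exists_mem_takeWhile_iff_forall_take {η : List α} {q : α → Bool} {B : Set α} {u : ℕ}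
    (hu : u < η.length) (huB : η[u] ∈ B) (hfirst : ∀ j (hj : j < η.length), j < u → η[j] ∉ B) :
    (∃ x ∈ η.takeWhile q, x ∈ B) ↔ ∀ x ∈ η.take (u + 1), q x := by
  constructor
  · rintro ⟨x, hx, hxB⟩
    obtain ⟨j, hj, rfl⟩ := mem_iff_getElem.1 hx
    rw [(takeWhile_prefix q).getElem hj] at hxB
    have hju : u ≤ j := not_lt.1 fun h => hfirst j _ h hxB
    have htake : η.take (u + 1) = (η.takeWhile q).take (u + 1) := by
      rw [prefix_iff_eq_take.1 (takeWhile_prefix q), take_take, min_eq_left (by omega)]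
    rw [htake]
    exact fun x hx => mem_takeWhile_imp (take_subset _ _ hx)
  · intro h
    refine ⟨η[u], ?_, huB⟩
    have hsplit := takeWhile_append_of_pos (l₂ := η.drop (u + 1)) h
    rw [take_append_drop] at hsplit
    rw [hsplit]
    exact mem_append_left _ (mem_take_iff_getElem.2 ⟨u, by simp [hu], rfl⟩)

end List

section LoopErasure

variable {α : Type*} [DecidableEq α]

theorem loopErase_nil : loopErase ([] : List α) = [] := by
  rw [loopErase]

theorem loopErase_induction {motive : List α → Prop} (nil : motive [])
    (cons : ∀ a l, motive (l.rtakeWhile (· ≠ a)) → motive (a :: l)) (l : List α) : motive l := by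
  induction l using loopErase.induct with
  | case1 => exact nil
  | case2 a l ih => exact cons a l (by simpa [List.rtakeWhile] using ih)

theorem loopErase_subset (l : List α) : loopErase l ⊆ l := by
  induction l using loopErase_induction with
  | nil => simp [loopErase_nil]
  | cons a l ih =>
    rw [loopErase_cons]
    exact List.cons_subset_cons a (List.Subset.trans ih (List.rtakeWhile_suffix _ _).subset)

theorem exists_loopErase_append (s t : List α) :
    ∃ w ⊆ t, loopErase (s ++ t) = (loopErase s).takeWhile (· ∉ t) ++ w := by
  induction s using loopErase_induction generalizing t with
  | nil => exact ⟨loopErase t, loopErase_subset t, by simp [loopErase_nil]⟩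
  | cons a s ih =>
    by_cases ha : a ∈ t
    · refine ⟨a :: loopErase (t.rtakeWhile (· ≠ a)), ?_, ?_⟩
      · exact List.cons_subset.2 ⟨ha,
          List.Subset.trans (loopErase_subset _) (List.rtakeWhile_suffix _ _).subset⟩
      · rw [List.cons_append, loopErase_cons, loopErase_cons,
          List.rtakeWhile_append_of_exists s ⟨a, ha, by simp⟩]
        simp [ha]
    · obtain ⟨w, hwt, hw⟩ := ih t
      refine ⟨w, hwt, ?_⟩
      rw [List.cons_append, loopErase_cons, loopErase_cons,
        List.rtakeWhile_append_of_forall_s3 s (fun x hx => by simpa using ne_of_mem_of_not_mem hx ha),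
        hw]
      simp [ha]

theorem exists_mem_loopErase_append_iff (s t : List α) {B : Set α}
    (htB : ∀ x ∈ t, x ∉ B) {u : ℕ} (hu : u < (loopErase s).length) (huB : (loopErase s)[u] ∈ B)
    (hfirst : ∀ j (hj : j < (loopErase s).length), j < u → (loopErase s)[j] ∉ B) :
    (∃ x ∈ loopErase (s ++ t), x ∈ B) ↔ ∀ x ∈ (loopErase s).take (u + 1), x ∉ t := by
  obtain ⟨w, hwt, hw⟩ := exists_loopErase_append s t
  have hw_misses : ¬ ∃ x ∈ w, x ∈ B := fun ⟨x, hx, hxB⟩ => htB x (hwt hx) hxB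
  rw [hw]
  simpa [or_and_right, exists_or, hw_misses] using
    List.exists_mem_takeWhile_iff_forall_take (q := (· ∉ t)) hu huB hfirst

end LoopErasure

theorem loopErase_hits_iff_general (l : List Z3) (B : Set Z3) (T : ℕ)
    (hTlast : ∀ j (hj : j < l.length), T < j → l.get ⟨j, hj⟩ ∉ B)
    (u : ℕ) (hu : u < (loopErase (l.take (T + 1))).length)
    (huB : (loopErase (l.take (T + 1))).get ⟨u, hu⟩ ∈ B)
    (hufirst : ∀ j (hj : j < (loopErase (l.take (T + 1))).length), j < u →
      (loopErase (l.take (T + 1))).get ⟨j, hj⟩ ∉ B) :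
    (∃ x ∈ loopErase l, x ∈ B) ↔
      ∀ x ∈ (loopErase (l.take (T + 1))).take (u + 1), x ∉ l.drop (T + 1) := by
  have htail_avoids : ∀ x ∈ l.drop (T + 1), x ∉ B := by
    intro x hx
    obtain ⟨i, hi, rfl⟩ := List.mem_iff_getElem.1 hx
    rw [List.length_drop] at hi
    simpa using hTlast (T + 1 + i) (by omega) (by omega)
  conv_lhs => rw [← List.take_append_drop (T + 1) l]
  exact exists_mem_loopErase_append_iff _ _ htail_avoids hu huB hufirst

/-- Let `λ` be a finite path, `B` a set of vertices visited by
`λ`.  Let `T` be the last time `λ` is in `B`, let `η = LE(λ[0,T])` and let `u`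
be the first index at which `η` enters `B`.  Then `LE(λ)` intersects `B` if and
only if `η[0,u] ∩ λ[T+1,m] = ∅`. -/
theorem loopErase_hits_iff (l : List Z3) (hl : IsPath l) (B : Set Z3)
    (T : ℕ) (hT : T < l.length)
    (hTB : l.get ⟨T, hT⟩ ∈ B)
    (hTlast : ∀ j (hj : j < l.length), T < j → l.get ⟨j, hj⟩ ∉ B)
    (u : ℕ) (hu : u < (loopErase (l.take (T + 1))).length)
    (huB : (loopErase (l.take (T + 1))).get ⟨u, hu⟩ ∈ B)
    (hufirst : ∀ j (hj : j < (loopErase (l.take (T + 1))).length), j < u →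
      (loopErase (l.take (T + 1))).get ⟨j, hj⟩ ∉ B) :
    (∃ x ∈ loopErase l, x ∈ B) ↔
      ∀ x ∈ (loopErase (l.take (T + 1))).take (u + 1), x ∉ l.drop (T + 1) :=
  loopErase_hits_iff_general l B T hTlast u hu huB hufirst
end

section
/- Let (X_i), (Y_i), α, X, Y be as above, and suppose there are constants 0 < ξ < 1 and C such that: (i) for all pairs (i,j) in a set G, |E[(X_i−α)(X_j−α) | Y_i=Y_j=1]| ≤ ξ α², (ii) for all pairs (i,j) not in G, E[(X_i−α)(X_j−α) | Y_i=Y_j=1] ≤ C α² and Σ_{(i,j)∉G} P(Y_i=Y_j=1) ≤ ξ Σ_{(i,j)∈G} P(Y_i=Y_j=1), and (iii) for (i,j) ∈ G, α² P(Y_i=Y_j=1) ≤ C E[X_i X_j]. Then E[(X − αY)²] ≤ (1 + C) C ξ E[X²]. -/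
/-!
Since `Y_i ∈ {0,1}` and `X_i` vanishes off `{Y_i = 1}`, `X - αY = ∑ᵢ 1_{Y_i=1} (X_i - α)`, so
`E[(X - αY)²] = ∑_{i,j} P(Y_i=Y_j=1) E[(X_i-α)(X_j-α) | Y_i=Y_j=1]`. The good pairs contribute
at most `ξ α²` times their mass, the bad ones at most `C α²` times theirs, which is at most `ξ`
times the good mass; and by (iii) and `X_i ≥ 0`, `α²` times the good mass is at most `C E[X²]`.
-/

open MeasureTheory ProbabilityTheory

lemma sq_sum_eq_sum_prod {ι R : Type*} [Fintype ι] [CommSemiring R] (f : ι → R) :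
    (∑ i, f i) ^ 2 = ∑ p : ι × ι, f p.1 * f p.2 := by
  rw [sq, Fintype.sum_mul_sum, Fintype.sum_prod_type]

lemma sub_mul_eq_ite_of_eq_zero_or_one {x y : ℝ} (hy : y = 0 ∨ y = 1) (hxy : y = 0 → x = 0)
    (α : ℝ) : x - α * y = if y = 1 then x - α else 0 := by
  rcases hy with rfl | rfl <;> simp [hxy]

lemma sq_sum_sub_mul_sum_eq_sum_ite {ι : Type*} [Fintype ι] {x y : ι → ℝ}
    (hy : ∀ i, y i = 0 ∨ y i = 1) (hxy : ∀ i, y i = 0 → x i = 0) (α : ℝ) :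
    ((∑ i, x i) - α * ∑ i, y i) ^ 2 =
      ∑ p : ι × ι, if y p.1 = 1 ∧ y p.2 = 1 then (x p.1 - α) * (x p.2 - α) else 0 := by
  rw [Finset.mul_sum, ← Finset.sum_sub_distrib, sq_sum_eq_sum_prod]
  refine Fintype.sum_congr _ _ fun p => ?_
  rw [sub_mul_eq_ite_of_eq_zero_or_one (hy _) (hxy _),
    sub_mul_eq_ite_of_eq_zero_or_one (hy _) (hxy _), ite_zero_mul_ite_zero]

lemma setIntegral_eq_measureReal_mul_integral_cond {Ω E : Type*} [MeasurableSpace Ω]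
    [NormedAddCommGroup E] [NormedSpace ℝ E] (μ : Measure Ω) [IsFiniteMeasure μ] (s : Set Ω)
    (f : Ω → E) : ∫ ω in s, f ω ∂μ = μ.real s • ∫ ω, f ω ∂μ[|s] := by
  rcases eq_or_ne (μ s) 0 with hs | hs
  · simp [Measure.restrict_eq_zero.mpr hs, measureReal_def, hs]
  · rw [ProbabilityTheory.cond, integral_smul_measure, smul_smul, ENNReal.toReal_inv,
      measureReal_def, mul_inv_cancel₀ (ENNReal.toReal_ne_zero.mpr ⟨hs, measure_ne_top μ s⟩),
      one_smul]

lemma integral_sq_sum_sub_mul_sum_eq_sum_measureReal_mul_integral_cond {Ω ι : Type*} [Finite Ω]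
    [MeasurableSpace Ω] [MeasurableSingletonClass Ω] [Fintype ι] (P : Measure Ω)
    [IsFiniteMeasure P] {X Y : ι → Ω → ℝ} (hY : ∀ i ω, Y i ω = 0 ∨ Y i ω = 1)
    (hXY : ∀ i ω, Y i ω = 0 → X i ω = 0) (α : ℝ) :
    ∫ ω, ((∑ i, X i ω) - α * ∑ i, Y i ω) ^ 2 ∂P =
      ∑ p : ι × ι, P.real {ω | Y p.1 ω = 1 ∧ Y p.2 ω = 1} *
        ∫ ω, (X p.1 ω - α) * (X p.2 ω - α) ∂P[|{ω | Y p.1 ω = 1 ∧ Y p.2 ω = 1}] := by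
  simp_rw [sq_sum_sub_mul_sum_eq_sum_ite (hY · _) (hXY · _) α]
  rw [integral_finsetSum _ fun p _ => .of_finite]
  refine Fintype.sum_congr _ _ fun p => ?_
  rw [← smul_eq_mul, ← setIntegral_eq_measureReal_mul_integral_cond,
    ← integral_indicator (Set.toFinite _).measurableSet]
  simp only [Set.indicator_apply, Set.mem_ofPred_eq]

lemma integral_sq_sum_eq_sum_integral_mul {Ω ι : Type*} [Finite Ω] [MeasurableSpace Ω]
    [MeasurableSingletonClass Ω] [Fintype ι] (P : Measure Ω) [IsFiniteMeasure P]
    (X : ι → Ω → ℝ) :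
    ∫ ω, (∑ i, X i ω) ^ 2 ∂P = ∑ p : ι × ι, ∫ ω, X p.1 ω * X p.2 ω ∂P := by
  simp_rw [sq_sum_eq_sum_prod]
  exact integral_finsetSum _ fun p _ => .of_finite

lemma sum_mul_le_of_good_bad_split {κ : Type*} [Fintype κ] [DecidableEq κ] (G : Finset κ)
    {μ c m : κ → ℝ} {a ξ C : ℝ} (hμ : ∀ p, 0 ≤ μ p) (hm : ∀ p, 0 ≤ m p) (ha : 0 ≤ a)
    (hξ : 0 ≤ ξ) (hC : 0 ≤ C) (hGood : ∀ p ∈ G, c p ≤ ξ * a) (hBad : ∀ p ∈ Gᶜ, c p ≤ C * a)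
    (hBadMass : ∑ p ∈ Gᶜ, μ p ≤ ξ * ∑ p ∈ G, μ p) (hOnePoint : ∀ p ∈ G, a * μ p ≤ C * m p) :
    ∑ p, μ p * c p ≤ (1 + C) * C * ξ * ∑ p, m p := by
  have hGoodSum : ∑ p ∈ G, μ p * c p ≤ ξ * a * ∑ p ∈ G, μ p := by
    rw [Finset.mul_sum]
    exact Finset.sum_le_sum fun p hp => by
      nlinarith [mul_le_mul_of_nonneg_left (hGood p hp) (hμ p)]
  have hBadSum : ∑ p ∈ Gᶜ, μ p * c p ≤ C * a * ∑ p ∈ Gᶜ, μ p := by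
    rw [Finset.mul_sum]
    exact Finset.sum_le_sum fun p hp => by
      nlinarith [mul_le_mul_of_nonneg_left (hBad p hp) (hμ p)]
  have hMass : a * ∑ p ∈ G, μ p ≤ C * ∑ p, m p := by
    rw [Finset.mul_sum, Finset.mul_sum]
    exact (Finset.sum_le_sum hOnePoint).trans <| Finset.sum_le_sum_of_subset_of_nonneg
      G.subset_univ fun p _ _ => mul_nonneg hC (hm p)
  calc ∑ p, μ p * c p = ∑ p ∈ G, μ p * c p + ∑ p ∈ Gᶜ, μ p * c p :=
        (Finset.sum_add_sum_compl G _).symm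
    _ ≤ ξ * a * ∑ p ∈ G, μ p + C * a * (ξ * ∑ p ∈ G, μ p) := by
        gcongr
        exact hBadSum.trans (by gcongr)
    _ = (1 + C) * ξ * (a * ∑ p ∈ G, μ p) := by ring
    _ ≤ (1 + C) * ξ * (C * ∑ p, m p) := by gcongr
    _ = (1 + C) * C * ξ * ∑ p, m p := by ring

theorem second_moment_estimate_general {Ω : Type*} [Fintype Ω] [MeasurableSpace Ω]
    [MeasurableSingletonClass Ω]
    (P : Measure Ω) [IsProbabilityMeasure P] (N : ℕ)
    (X Y : Fin N → Ω → ℝ)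
    (hY : ∀ i ω, Y i ω = 0 ∨ Y i ω = 1)
    (hX : ∀ i ω, 0 ≤ X i ω)
    (hXY : ∀ i ω, Y i ω = 0 → X i ω = 0)
    (α : ℝ) (G : Finset (Fin N × Fin N)) (ξ C : ℝ)
    (hξ0 : 0 < ξ) (hC : 0 < C)
    (hGood : ∀ p ∈ G,
      |∫ ω, (X p.1 ω - α) * (X p.2 ω - α)
          ∂(ProbabilityTheory.cond P {ω | Y p.1 ω = 1 ∧ Y p.2 ω = 1})| ≤ ξ * α ^ 2)
    (hBad : ∀ p ∈ Gᶜ,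
      ∫ ω, (X p.1 ω - α) * (X p.2 ω - α)
          ∂(ProbabilityTheory.cond P {ω | Y p.1 ω = 1 ∧ Y p.2 ω = 1}) ≤ C * α ^ 2)
    (hBadMass : ∑ p ∈ Gᶜ, (P {ω | Y p.1 ω = 1 ∧ Y p.2 ω = 1}).toReal ≤
      ξ * ∑ p ∈ G, (P {ω | Y p.1 ω = 1 ∧ Y p.2 ω = 1}).toReal)
    (hOnePoint : ∀ p ∈ G,
      α ^ 2 * (P {ω | Y p.1 ω = 1 ∧ Y p.2 ω = 1}).toReal ≤
        C * ∫ ω, X p.1 ω * X p.2 ω ∂P) :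
    ∫ ω, ((∑ i, X i ω) - α * (∑ i, Y i ω)) ^ 2 ∂P ≤
      (1 + C) * C * ξ * ∫ ω, (∑ i, X i ω) ^ 2 ∂P := by
  rw [integral_sq_sum_sub_mul_sum_eq_sum_measureReal_mul_integral_cond P hY hXY,
    integral_sq_sum_eq_sum_integral_mul]
  exact sum_mul_le_of_good_bad_split G (fun _ => measureReal_nonneg)
    (fun _ => integral_nonneg fun _ => mul_nonneg (hX _ _) (hX _ _)) (sq_nonneg α) hξ0.le hC.le
    (fun p hp => (le_abs_self _).trans (hGood p hp)) hBad hBadMass hOnePoint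

/-- In the setup of the second-moment decomposition, suppose
there are constants `0 < ξ < 1` and `C > 0` and a set `G` of index pairs such
that: (i) for `(i,j) ∈ G` the conditional covariance satisfies
`|E[(X_i−α)(X_j−α) | Y_i=Y_j=1]| ≤ ξ α²`; (ii) for `(i,j) ∉ G` it is at most
`C α²` and `Σ_{(i,j)∉G} P(Y_i=Y_j=1) ≤ ξ Σ_{(i,j)∈G} P(Y_i=Y_j=1)`; and
(iii) for `(i,j) ∈ G`, `α² P(Y_i=Y_j=1) ≤ C E[X_i X_j]`.  Then
`E[(X − αY)²] ≤ (1 + C) C ξ E[X²]`. -/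
theorem second_moment_estimate {Ω : Type*} [Fintype Ω] [MeasurableSpace Ω]
    [MeasurableSingletonClass Ω]
    (P : Measure Ω) [IsProbabilityMeasure P] (N : ℕ)
    (X Y : Fin N → Ω → ℝ)
    (hY : ∀ i ω, Y i ω = 0 ∨ Y i ω = 1)
    (hX : ∀ i ω, 0 ≤ X i ω)
    (hXY : ∀ i ω, Y i ω = 0 → X i ω = 0)
    (α : ℝ) (G : Finset (Fin N × Fin N)) (ξ C : ℝ)
    (hξ0 : 0 < ξ) (hξ1 : ξ < 1) (hC : 0 < C)
    (hGood : ∀ p ∈ G,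
      |∫ ω, (X p.1 ω - α) * (X p.2 ω - α)
          ∂(ProbabilityTheory.cond P {ω | Y p.1 ω = 1 ∧ Y p.2 ω = 1})| ≤ ξ * α ^ 2)
    (hBad : ∀ p ∈ Gᶜ,
      ∫ ω, (X p.1 ω - α) * (X p.2 ω - α)
          ∂(ProbabilityTheory.cond P {ω | Y p.1 ω = 1 ∧ Y p.2 ω = 1}) ≤ C * α ^ 2)
    (hBadMass : ∑ p ∈ Gᶜ, (P {ω | Y p.1 ω = 1 ∧ Y p.2 ω = 1}).toReal ≤
      ξ * ∑ p ∈ G, (P {ω | Y p.1 ω = 1 ∧ Y p.2 ω = 1}).toReal)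
    (hOnePoint : ∀ p ∈ G,
      α ^ 2 * (P {ω | Y p.1 ω = 1 ∧ Y p.2 ω = 1}).toReal ≤
        C * ∫ ω, X p.1 ω * X p.2 ω ∂P) :
    ∫ ω, ((∑ i, X i ω) - α * (∑ i, Y i ω)) ^ 2 ∂P ≤
      (1 + C) * C * ξ * ∫ ω, (∑ i, X i ω) ^ 2 ∂P :=
  second_moment_estimate_general P N X Y hY hX hXY α G ξ C hξ0 hC hGood hBad hBadMass hOnePoint
end
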